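/- Let (X, dist) be a metric space, let μ be a Borel measure on X, and let P be a perimeter structure on (X, μ). Suppose there exist a real number s ≥ 1 and ε > 0 such that: (1) there is a maximal ε-separated net Y ⊆ X and a constant C₁ < ∞ such that for every nonempty finite subset S ⊆ Y one has (card S)^((s-1)/s) ≤ C₁ · card ∂S, where ∂S := {y ∈ Y \ S : ∃ x ∈ S, dist(y, x) ≤ 2ε}; (2) there exist constants c ≥ 1 and C₂ < ∞ such that for every r ∈ {ε, 3ε}, every y ∈ Y and every nonempty open connected set E ⊆ X with compact closure and P(E, X) < ∞, one has (min{μ(E ∩ B(y, r)), μ((X \ E) ∩ B(y, r))})^((s-1)/s) ≤ C₂ · P(E, B(y, c·r)); (3) for every r > 0, sup_{y ∈ Y} card(B(y, r) ∩ Y) < ∞; (4) there are constants 0 < c₋ ≤ c₊ < ∞ with c₋ ≤ μ(B(y, ε)) ≤ c₊ for all y ∈ Y. Then there exists a constant C < ∞ such that μ(E)^((s-1)/s) ≤ C · P(E, X) for every nonempty open connected set E ⊆ X with compact closure and P(E, X) < ∞. -/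

import Mathlib

/-!
Cover `E` by the cells `B(y, ε)`, `y ∈ Y`, and split the net points meeting `E` into the set `S`
of heavy points, whose cell is at least half filled by `E`, and the light ones. On a light cell the
minimum in the relative inequality is `μ(E ∩ B(y, ε))`, so by the bounded overlap of the balls
`B(y, cε)` the light cells contribute `≲ P(E, X)`. The heavy cells contribute `≲ card S`, which the
rough inequality bounds by `card ∂S`; a point of `∂S` sees half a cell of `Eᶜ` in its own cell and
half a cell of `E` in that of a heavy neighbour, so the relative inequality at scale `3ε` gives
`card ∂S ≲ P(E, X)`. Subadditivity of `t ↦ t ^ ((s - 1) / s)` glues the two estimates.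
-/

open MeasureTheory Metric Set ENNReal

theorem ENNReal.rpow_sum_le_sum_rpow {ι : Type*} (F : Finset ι) (f : ι → ℝ≥0∞) {p : ℝ}
    (hp : 0 < p) (hp1 : p ≤ 1) : (∑ i ∈ F, f i) ^ p ≤ ∑ i ∈ F, f i ^ p := by
  classical
  induction F using Finset.induction with
  | empty => simp [zero_rpow_of_pos hp]
  | insert i F hi ih =>
    rw [Finset.sum_insert hi, Finset.sum_insert hi]
    exact (rpow_add_le_add_rpow _ _ hp.le hp1).trans (by gcongr)

theorem MeasureTheory.sum_measure_le_mul_measure_univ {α ι : Type*} [MeasurableSpace α]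
    (ν : Measure α) (F : Finset ι) {A : ι → Set α} (hA : ∀ i ∈ F, MeasurableSet (A i))
    {N : ℕ} (hN : ∀ x, {i ∈ (F : Set ι) | x ∈ A i}.encard ≤ N) :
    ∑ i ∈ F, ν (A i) ≤ N * ν univ := by
  classical
  calc ∑ i ∈ F, ν (A i) = ∫⁻ x, ∑ i ∈ F, (A i).indicator 1 x ∂ν := by
        rw [lintegral_finsetSum _ fun i hi => measurable_one.indicator (hA i hi)]
        exact Finset.sum_congr rfl fun i hi => (lintegral_indicator_one (hA i hi)).symm
    _ ≤ ∫⁻ _, (N : ℝ≥0∞) ∂ν := lintegral_mono fun x => by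
        have hx := hN x
        rw [show {i ∈ (F : Set ι) | x ∈ A i} = ↑(F.filter (x ∈ A ·)) by simp,
          encard_coe_eq_coe_finsetCard, Nat.cast_le] at hx
        simpa [indicator_apply] using hx
    _ = N * ν univ := lintegral_const _

section HalfFilled

variable {α : Type*} [MeasurableSpace α] (ν : Measure α) {E A : Set α}

theorem MeasureTheory.measure_le_measure_inter_add_measure_compl_inter (E A : Set α) :
    ν A ≤ ν (E ∩ A) + ν (Eᶜ ∩ A) := by
  simpa [inter_comm, sdiff_eq_compl_inter] using measure_le_inter_add_sdiff ν A E

theorem MeasureTheory.measure_inter_le_measure_compl_inter (h : 2 * ν (E ∩ A) ≤ ν A)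
    (hfin : ν (E ∩ A) ≠ ∞) : ν (E ∩ A) ≤ ν (Eᶜ ∩ A) := by
  rw [two_mul] at h
  exact (ENNReal.add_le_add_iff_left hfin).1
    (h.trans (measure_le_measure_inter_add_measure_compl_inter ν E A))

theorem MeasureTheory.measure_le_two_mul_measure_compl_inter (h : 2 * ν (E ∩ A) ≤ ν A)
    (hfin : ν (E ∩ A) ≠ ∞) : ν A ≤ 2 * ν (Eᶜ ∩ A) :=
  calc ν A ≤ ν (E ∩ A) + ν (Eᶜ ∩ A) := measure_le_measure_inter_add_measure_compl_inter ν E A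
    _ ≤ 2 * ν (Eᶜ ∩ A) := by
        rw [two_mul]
        exact add_le_add_left (measure_inter_le_measure_compl_inter ν h hfin) _

end HalfFilled

section Net

variable {X : Type*} [MetricSpace X] {Y : Set X} {ε : ℝ}

theorem finite_inter_of_isBounded
    (hloc : ∀ r : ℝ, 0 < r → ∃ N : ℕ, ∀ y ∈ Y, (ball y r ∩ Y).encard ≤ N)
    {B : Set X} (hB : Bornology.IsBounded B) : (Y ∩ B).Finite := by
  rcases (Y ∩ B).eq_empty_or_nonempty with h | ⟨y₀, hy₀Y, hy₀B⟩
  · simp [h]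
  obtain ⟨r, hr, hBr⟩ := hB.subset_ball_lt 0 y₀
  obtain ⟨N, hN⟩ := hloc r hr
  exact finite_of_encard_le_coe
    ((hN y₀ hy₀Y).trans' (encard_le_encard fun y hy => ⟨hBr hy.2, hy.1⟩))

theorem encard_setOf_mem_ball_le (hmax : ∀ x : X, ∃ y ∈ Y, dist x y < ε) {ρ : ℝ} {N : ℕ}
    (hN : ∀ y ∈ Y, (ball y (ρ + ε) ∩ Y).encard ≤ N) {T : Set X} (hT : T ⊆ Y) (x : X) :
    {y ∈ T | x ∈ ball y ρ}.encard ≤ N := by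
  obtain ⟨y₀, hy₀, hxy₀⟩ := hmax x
  refine (hN y₀ hy₀).trans' (encard_le_encard fun y hy => ⟨?_, hT hy.1⟩)
  rw [mem_ball]
  calc dist y y₀ ≤ dist y x + dist x y₀ := dist_triangle _ _ _
    _ < ρ + ε := add_lt_add (mem_ball'.1 hy.2) hxy₀

theorem sum_le_mul_measure_univ_of_le_measure_ball [MeasurableSpace X] [OpensMeasurableSpace X]
    (hmax : ∀ x : X, ∃ y ∈ Y, dist x y < ε) {ρ : ℝ} {N : ℕ}
    (hN : ∀ y ∈ Y, (ball y (ρ + ε) ∩ Y).encard ≤ N) (ν : Measure X) {F : Finset X}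
    (hF : ↑F ⊆ Y) {f : X → ℝ≥0∞} {C : ℝ≥0∞} (hf : ∀ y ∈ F, f y ≤ C * ν (ball y ρ)) :
    ∑ y ∈ F, f y ≤ C * (N * ν univ) :=
  calc ∑ y ∈ F, f y ≤ ∑ y ∈ F, C * ν (ball y ρ) := Finset.sum_le_sum hf
    _ = C * ∑ y ∈ F, ν (ball y ρ) := (Finset.mul_sum _ _ _).symm
    _ ≤ C * (N * ν univ) := by
        gcongr
        exact sum_measure_le_mul_measure_univ ν F (fun _ _ => measurableSet_ball)
          (encard_setOf_mem_ball_le hmax hN hF)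

theorem measure_le_sum_measure_inter_ball [MeasurableSpace X] (μ : Measure X)
    (hmax : ∀ x : X, ∃ y ∈ Y, dist x y < ε) (E : Set X) {F : Finset X}
    (hF : Y ∩ thickening ε E ⊆ F) : μ E ≤ ∑ y ∈ F, μ (E ∩ ball y ε) := by
  refine (measure_mono fun x hx => ?_).trans (measure_biUnion_finset_le F fun y => E ∩ ball y ε)
  obtain ⟨y, hyY, hxy⟩ := hmax x
  exact mem_iUnion₂.2
    ⟨y, hF ⟨hyY, mem_thickening_iff.2 ⟨x, hx, by rwa [dist_comm]⟩⟩, hx, mem_ball.2 hxy⟩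

def netBoundary (Y : Set X) (ε : ℝ) (S : Set X) : Set X :=
  {y ∈ Y \ S | ∃ x ∈ S, dist y x ≤ 2 * ε}

theorem netBoundary_subset {E S : Set X} (hS : S ⊆ thickening ε E) :
    netBoundary Y ε S ⊆ Y ∩ thickening (3 * ε) E := by
  rintro y ⟨⟨hyY, -⟩, x, hxS, hyx⟩
  obtain ⟨z, hzE, hxz⟩ := mem_thickening_iff.1 (hS hxS)
  refine ⟨hyY, mem_thickening_iff.2 ⟨z, hzE, ?_⟩⟩
  calc dist y z ≤ dist y x + dist x z := dist_triangle _ _ _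
    _ < 3 * ε := by linarith

end Net

section NetArgument

variable {X : Type*} [MetricSpace X] [MeasurableSpace X]

def heavyNetPoints (μ : Measure X) (Y : Set X) (ε : ℝ) (E : Set X) : Set X :=
  {y ∈ Y | μ (ball y ε) ≤ 2 * μ (E ∩ ball y ε)}

variable {μ : Measure X} {Y E : Set X} {ε : ℝ}

theorem heavyNetPoints_subset (hpos : ∀ y ∈ Y, μ (ball y ε) ≠ 0) :
    heavyNetPoints μ Y ε E ⊆ Y ∩ thickening ε E := by
  rintro y ⟨hyY, hy⟩
  have hμE : μ (E ∩ ball y ε) ≠ 0 := fun h => hpos y hyY (by simpa [h] using hy)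
  obtain ⟨x, hxE, hxy⟩ := nonempty_of_measure_ne_zero hμE
  exact ⟨hyY, mem_thickening_iff.2 ⟨x, hxE, mem_ball'.1 hxy⟩⟩

theorem min_measure_inter_ball_eq_of_notMem_heavyNetPoints
    (hfin : ∀ y ∈ Y, μ (ball y ε) ≠ ∞) {y : X} (hyY : y ∈ Y) (hy : y ∉ heavyNetPoints μ Y ε E) :
    min (μ (E ∩ ball y ε)) (μ (Eᶜ ∩ ball y ε)) = μ (E ∩ ball y ε) :=
  min_eq_left <| measure_inter_le_measure_compl_inter μ (not_le.1 fun h => hy ⟨hyY, h⟩).le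
    (ne_top_of_le_ne_top (hfin y hyY) (measure_mono inter_subset_right))

theorem half_le_min_of_mem_netBoundary {cminus : ℝ≥0∞} (hvol : ∀ y ∈ Y, cminus ≤ μ (ball y ε))
    (hfin : ∀ y ∈ Y, μ (ball y ε) ≠ ∞) {y : X}
    (hy : y ∈ netBoundary Y ε (heavyNetPoints μ Y ε E)) :
    cminus / 2 ≤ min (μ (E ∩ ball y (3 * ε))) (μ (Eᶜ ∩ ball y (3 * ε))) := by
  obtain ⟨⟨hyY, hyS⟩, x, ⟨hxY, hx⟩, hyx⟩ := hy
  refine le_min (div_le_of_le_mul' ?_) (div_le_of_le_mul' ?_)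
  · calc cminus ≤ μ (ball x ε) := hvol x hxY
      _ ≤ 2 * μ (E ∩ ball x ε) := hx
      _ ≤ 2 * μ (E ∩ ball y (3 * ε)) := by
          gcongr
          exact ball_subset_ball' (by rw [dist_comm]; linarith)
  · calc cminus ≤ μ (ball y ε) := hvol y hyY
      _ ≤ 2 * μ (Eᶜ ∩ ball y ε) :=
          measure_le_two_mul_measure_compl_inter μ (not_le.1 fun h => hyS ⟨hyY, h⟩).le
            (ne_top_of_le_ne_top (hfin y hyY) (measure_mono inter_subset_right))
      _ ≤ 2 * μ (Eᶜ ∩ ball y (3 * ε)) := by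
          gcongr
          linarith [(dist_nonneg : 0 ≤ dist y x)]

variable [OpensMeasurableSpace X] {α : ℝ} {ν : Measure X} {C₂ : ℝ≥0∞} {ρ : ℝ} {N : ℕ}

theorem rpow_measure_le_heavy_add_perimeter (hmax : ∀ x : X, ∃ y ∈ Y, dist x y < ε)
    (hloc : ∀ r : ℝ, 0 < r → ∃ N : ℕ, ∀ y ∈ Y, (ball y r ∩ Y).encard ≤ N)
    {cplus : ℝ≥0∞} (hvol : ∀ y ∈ Y, μ (ball y ε) ≤ cplus) (hcplus : cplus ≠ ∞)
    (hE : Bornology.IsBounded E) (hα : 0 < α) (hα1 : α ≤ 1)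
    (hN : ∀ y ∈ Y, (ball y (ρ + ε) ∩ Y).encard ≤ N)
    (hrel : ∀ y ∈ Y, (min (μ (E ∩ ball y ε)) (μ (Eᶜ ∩ ball y ε))) ^ α ≤ C₂ * ν (ball y ρ)) :
    μ E ^ α ≤ cplus ^ α * ((heavyNetPoints μ Y ε E).encard : ℝ≥0∞) ^ α + C₂ * (N * ν univ) := by
  classical
  set S := heavyNetPoints μ Y ε E
  have hT := finite_inter_of_isBounded hloc (hE.thickening (δ := ε))
  set F := hT.toFinset
  have hFY : ∀ y ∈ F, y ∈ Y := fun y hy => (hT.mem_toFinset.1 hy).1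
  have hheavy : ∑ y ∈ F with y ∈ S, μ (E ∩ ball y ε) ≤ cplus * S.encard :=
    calc ∑ y ∈ F with y ∈ S, μ (E ∩ ball y ε) ≤ ∑ y ∈ F with y ∈ S, cplus :=
          Finset.sum_le_sum fun y hy => (measure_mono inter_subset_right).trans
            (hvol y (hFY y (Finset.mem_filter.1 hy).1))
      _ = cplus * (F.filter (· ∈ S)).card := by rw [Finset.sum_const, nsmul_eq_mul, mul_comm]
      _ ≤ cplus * S.encard := by
          gcongr
          rw [← ENat.toENNReal_coe, ENat.toENNReal_le, ← encard_coe_eq_coe_finsetCard]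
          exact encard_le_encard fun y hy => (Finset.mem_filter.1 hy).2
  have hlight : ∑ y ∈ F with y ∉ S, μ (E ∩ ball y ε) ^ α ≤ C₂ * (N * ν univ) :=
    sum_le_mul_measure_univ_of_le_measure_ball hmax hN ν
      (fun y hy => hFY y (Finset.mem_filter.1 hy).1) fun y hy => by
        obtain ⟨hyF, hyS⟩ := Finset.mem_filter.1 hy
        rw [← min_measure_inter_ball_eq_of_notMem_heavyNetPoints
          (fun y hy => ne_top_of_le_ne_top hcplus (hvol y hy)) (hFY y hyF) hyS]
        exact hrel y (hFY y hyF)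
  calc μ E ^ α ≤ (∑ y ∈ F, μ (E ∩ ball y ε)) ^ α := by
        gcongr
        exact measure_le_sum_measure_inter_ball μ hmax E (by simp [F])
    _ = (∑ y ∈ F with y ∈ S, μ (E ∩ ball y ε) + ∑ y ∈ F with y ∉ S, μ (E ∩ ball y ε)) ^ α := by
        rw [Finset.sum_filter_add_sum_filter_not]
    _ ≤ (∑ y ∈ F with y ∈ S, μ (E ∩ ball y ε)) ^ α + ∑ y ∈ F with y ∉ S, μ (E ∩ ball y ε) ^ α :=
        (rpow_add_le_add_rpow _ _ hα.le hα1).trans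
          (by gcongr; exact rpow_sum_le_sum_rpow _ _ hα hα1)
    _ ≤ cplus ^ α * (S.encard : ℝ≥0∞) ^ α + C₂ * (N * ν univ) := by
        rw [← mul_rpow_of_nonneg _ _ hα.le]
        gcongr

theorem rpow_half_mul_encard_netBoundary_le (hmax : ∀ x : X, ∃ y ∈ Y, dist x y < ε)
    (hloc : ∀ r : ℝ, 0 < r → ∃ N : ℕ, ∀ y ∈ Y, (ball y r ∩ Y).encard ≤ N)
    {cminus : ℝ≥0∞} (h0 : 0 < cminus) (hvol : ∀ y ∈ Y, cminus ≤ μ (ball y ε))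
    (hfin : ∀ y ∈ Y, μ (ball y ε) ≠ ∞) (hE : Bornology.IsBounded E) (hα : 0 ≤ α)
    (hN : ∀ y ∈ Y, (ball y (ρ + ε) ∩ Y).encard ≤ N)
    (hrel : ∀ y ∈ Y,
      (min (μ (E ∩ ball y (3 * ε))) (μ (Eᶜ ∩ ball y (3 * ε)))) ^ α ≤ C₂ * ν (ball y ρ)) :
    (cminus / 2) ^ α * ((netBoundary Y ε (heavyNetPoints μ Y ε E)).encard : ℝ≥0∞) ≤
      C₂ * (N * ν univ) := by
  set D := netBoundary Y ε (heavyNetPoints μ Y ε E)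
  have hS := heavyNetPoints_subset (E := E) fun y hy => (h0.trans_le (hvol y hy)).ne'
  have hD : D.Finite := (finite_inter_of_isBounded hloc hE.thickening).subset
    (netBoundary_subset (hS.trans inter_subset_right))
  rw [hD.encard_eq_coe_toFinset_card, ENat.toENNReal_coe, mul_comm, ← nsmul_eq_mul,
    ← Finset.sum_const]
  exact sum_le_mul_measure_univ_of_le_measure_ball hmax hN ν
    (fun y hy => (hD.mem_toFinset.1 hy).1.1) fun y hy =>
      (rpow_le_rpow (half_le_min_of_mem_netBoundary hvol hfin (hD.mem_toFinset.1 hy)) hα).trans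
        (hrel y (hD.mem_toFinset.1 hy).1.1)

theorem rpow_measure_le_mul_measure_univ (hmax : ∀ x : X, ∃ y ∈ Y, dist x y < ε)
    (hloc : ∀ r : ℝ, 0 < r → ∃ N : ℕ, ∀ y ∈ Y, (ball y r ∩ Y).encard ≤ N)
    {cminus cplus : ℝ≥0∞} (h0 : 0 < cminus) (hcminus : cminus ≠ ∞) (hcplus : cplus ≠ ∞)
    (hvol : ∀ y ∈ Y, cminus ≤ μ (ball y ε) ∧ μ (ball y ε) ≤ cplus)
    (hE : Bornology.IsBounded E) (hα : 0 < α) (hα1 : α ≤ 1) {C₁ : ℝ≥0∞}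
    (hrough : ∀ S ⊆ Y, S.Finite → S.Nonempty →
      (S.encard : ℝ≥0∞) ^ α ≤ C₁ * (netBoundary Y ε S).encard)
    {ρ₁ ρ₃ : ℝ} {N₁ N₃ : ℕ} (hN₁ : ∀ y ∈ Y, (ball y (ρ₁ + ε) ∩ Y).encard ≤ N₁)
    (hN₃ : ∀ y ∈ Y, (ball y (ρ₃ + ε) ∩ Y).encard ≤ N₃)
    (hrel₁ : ∀ y ∈ Y, (min (μ (E ∩ ball y ε)) (μ (Eᶜ ∩ ball y ε))) ^ α ≤ C₂ * ν (ball y ρ₁))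
    (hrel₃ : ∀ y ∈ Y,
      (min (μ (E ∩ ball y (3 * ε))) (μ (Eᶜ ∩ ball y (3 * ε)))) ^ α ≤ C₂ * ν (ball y ρ₃)) :
    μ E ^ α ≤ (cplus ^ α * C₁ * (C₂ * N₃ / (cminus / 2) ^ α) + C₂ * N₁) * ν univ := by
  set S := heavyNetPoints μ Y ε E
  set q := (cminus / 2) ^ α
  have hfin : ∀ y ∈ Y, μ (ball y ε) ≠ ∞ := fun y hy => ne_top_of_le_ne_top hcplus (hvol y hy).2
  have hq0 : q ≠ 0 := (rpow_pos (ENNReal.half_pos h0.ne') (div_ne_top hcminus two_ne_zero)).ne'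
  have hq : q ≠ ∞ := rpow_ne_top_of_nonneg hα.le (div_ne_top hcminus two_ne_zero)
  have hD : ((netBoundary Y ε S).encard : ℝ≥0∞) ≤ C₂ * N₃ * ν univ / q := by
    rw [ENNReal.le_div_iff_mul_le (Or.inl hq0) (Or.inl hq), mul_comm, mul_assoc]
    exact rpow_half_mul_encard_netBoundary_le hmax hloc h0 (fun y hy => (hvol y hy).1) hfin hE
      hα.le hN₃ hrel₃
  have hS : (S.encard : ℝ≥0∞) ^ α ≤ C₁ * (C₂ * N₃ * ν univ / q) := by
    rcases S.eq_empty_or_nonempty with h | h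
    · simp [h, zero_rpow_of_pos hα]
    have hSY := heavyNetPoints_subset (E := E) fun y hy => (h0.trans_le (hvol y hy).1).ne'
    exact (hrough S (hSY.trans inter_subset_left)
      ((finite_inter_of_isBounded hloc hE.thickening).subset hSY) h).trans (by gcongr)
  calc μ E ^ α ≤ cplus ^ α * (S.encard : ℝ≥0∞) ^ α + C₂ * (N₁ * ν univ) :=
        rpow_measure_le_heavy_add_perimeter hmax hloc (fun y hy => (hvol y hy).2) hcplus hE hα
          hα1 hN₁ hrel₁
    _ ≤ cplus ^ α * (C₁ * (C₂ * N₃ * ν univ / q)) + C₂ * (N₁ * ν univ) := by gcongr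
    _ = (cplus ^ α * C₁ * (C₂ * N₃ / q) + C₂ * N₁) * ν univ := by
        rw [div_eq_mul_inv, div_eq_mul_inv]
        ring

end NetArgument

theorem global_isoperimetric_inequality_general
    {X : Type*} [MetricSpace X] [MeasurableSpace X] [BorelSpace X]
    (μ : Measure X) (P : Set X → Measure X)
    (s ε : ℝ) (hs : 1 ≤ s) (hε : 0 < ε)
    (Y : Set X)
    -- `Y` is a maximal `ε`-separated net
    (hmax : ∀ x : X, ∃ y ∈ Y, dist x y < ε)
    -- (1) rough `s`-dimensional isoperimetric inequality on the net
    (C₁ : ℝ≥0∞) (hC₁ : C₁ < ⊤)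
    (hrough : ∀ S : Set X, S ⊆ Y → S.Finite → S.Nonempty →
      ((S.encard : ℝ≥0∞)) ^ ((s - 1) / s) ≤
        C₁ * (({y ∈ Y \ S | ∃ x ∈ S, dist y x ≤ 2 * ε}).encard : ℝ≥0∞))
    -- (2) weak relative `s`-dimensional isoperimetric inequality at scales `ε` and `3ε`
    (c : ℝ) (hc : 1 ≤ c) (C₂ : ℝ≥0∞) (hC₂ : C₂ < ⊤)
    (hrel : ∀ r ∈ ({ε, 3 * ε} : Set ℝ), ∀ y ∈ Y, ∀ E : Set X,
      E.Nonempty → IsOpen E → IsConnected E → IsCompact (closure E) →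
      P E Set.univ < ⊤ →
      (min (μ (E ∩ ball y r)) (μ (Eᶜ ∩ ball y r))) ^ ((s - 1) / s) ≤
        C₂ * P E (ball y (c * r)))
    -- (3) uniformly bounded number of net points in balls of any fixed radius
    (hloc : ∀ r : ℝ, 0 < r → ∃ N : ℕ, ∀ y ∈ Y, (ball y r ∩ Y).encard ≤ N)
    -- (4) uniform volume bounds for `ε`-balls centered at net points
    (cminus cplus : ℝ≥0∞) (h0 : 0 < cminus) (hle : cminus ≤ cplus) (hfin : cplus < ⊤)
    (hvol : ∀ y ∈ Y, cminus ≤ μ (ball y ε) ∧ μ (ball y ε) ≤ cplus) :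
    ∃ C : ℝ≥0∞, C < ⊤ ∧ ∀ E : Set X,
      E.Nonempty → IsOpen E → IsConnected E → IsCompact (closure E) →
      P E Set.univ < ⊤ →
      (μ E) ^ ((s - 1) / s) ≤ C * P E Set.univ := by
  have hs₀ : 0 < s := by linarith
  rcases (div_nonneg (by linarith) hs₀.le : 0 ≤ (s - 1) / s).eq_or_lt with hα | hα
  · refine ⟨C₂, hC₂, fun E ⟨x, hx⟩ hop hconn hcpt hper => ?_⟩
    obtain ⟨y, hy, -⟩ := hmax x
    have h := hrel ε (mem_insert _ _) y hy E ⟨x, hx⟩ hop hconn hcpt hper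
    rw [← hα, rpow_zero] at h ⊢
    exact h.trans (by gcongr; exact subset_univ _)
  have hα₁ : (s - 1) / s ≤ 1 := (div_le_one hs₀).2 (by linarith)
  obtain ⟨N₁, hN₁⟩ := hloc (c * ε + ε) (by nlinarith)
  obtain ⟨N₃, hN₃⟩ := hloc (c * (3 * ε) + ε) (by nlinarith)
  have hcminus : cminus ≠ ∞ := (hle.trans_lt hfin).ne
  have hq : (cminus / 2) ^ ((s - 1) / s) ≠ 0 :=
    (rpow_pos (ENNReal.half_pos h0.ne') (div_ne_top hcminus two_ne_zero)).ne'
  refine ⟨cplus ^ ((s - 1) / s) * C₁ * (C₂ * N₃ / (cminus / 2) ^ ((s - 1) / s)) + C₂ * N₁,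
    by finiteness, fun E hne hop hconn hcpt hper => ?_⟩
  exact rpow_measure_le_mul_measure_univ hmax hloc h0 hcminus hfin.ne hvol
    (hcpt.isBounded.subset subset_closure) hα hα₁ hrough hN₁ hN₃
    (hrel ε (mem_insert _ _) · · E hne hop hconn hcpt hper)
    (hrel (3 * ε) (mem_insert_of_mem _ rfl) · · E hne hop hconn hcpt hper)

/-- Axiomatic transition from a rough isoperimetric inequality on a maximal
`ε`-separated net together with a weak relative isoperimetric inequality at
scales `ε` and `3ε` to a global `s`-dimensional isoperimetric inequality
(Theorem on global isoperimetric inequalities in metric measure spaces with a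
perimeter structure). -/
theorem global_isoperimetric_inequality
    {X : Type*} [MetricSpace X] [MeasurableSpace X] [BorelSpace X]
    (μ : Measure X) (P : Set X → Measure X)
    (s ε : ℝ) (hs : 1 ≤ s) (hε : 0 < ε)
    (Y : Set X)
    -- `Y` is a maximal `ε`-separated net
    (hsep : ∀ y ∈ Y, ∀ y' ∈ Y, y ≠ y' → ε ≤ dist y y')
    (hmax : ∀ x : X, ∃ y ∈ Y, dist x y < ε)
    -- (1) rough `s`-dimensional isoperimetric inequality on the net
    (C₁ : ℝ≥0∞) (hC₁ : C₁ < ⊤)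
    (hrough : ∀ S : Set X, S ⊆ Y → S.Finite → S.Nonempty →
      ((S.encard : ℝ≥0∞)) ^ ((s - 1) / s) ≤
        C₁ * (({y ∈ Y \ S | ∃ x ∈ S, dist y x ≤ 2 * ε}).encard : ℝ≥0∞))
    -- (2) weak relative `s`-dimensional isoperimetric inequality at scales `ε` and `3ε`
    (c : ℝ) (hc : 1 ≤ c) (C₂ : ℝ≥0∞) (hC₂ : C₂ < ⊤)
    (hrel : ∀ r ∈ ({ε, 3 * ε} : Set ℝ), ∀ y ∈ Y, ∀ E : Set X,
      E.Nonempty → IsOpen E → IsConnected E → IsCompact (closure E) →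
      P E Set.univ < ⊤ →
      (min (μ (E ∩ ball y r)) (μ (Eᶜ ∩ ball y r))) ^ ((s - 1) / s) ≤
        C₂ * P E (ball y (c * r)))
    -- (3) uniformly bounded number of net points in balls of any fixed radius
    (hloc : ∀ r : ℝ, 0 < r → ∃ N : ℕ, ∀ y ∈ Y, (ball y r ∩ Y).encard ≤ N)
    -- (4) uniform volume bounds for `ε`-balls centered at net points
    (cminus cplus : ℝ≥0∞) (h0 : 0 < cminus) (hle : cminus ≤ cplus) (hfin : cplus < ⊤)
    (hvol : ∀ y ∈ Y, cminus ≤ μ (ball y ε) ∧ μ (ball y ε) ≤ cplus) :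
    ∃ C : ℝ≥0∞, C < ⊤ ∧ ∀ E : Set X,
      E.Nonempty → IsOpen E → IsConnected E → IsCompact (closure E) →
      P E Set.univ < ⊤ →
      (μ E) ^ ((s - 1) / s) ≤ C * P E Set.univ :=
  global_isoperimetric_inequality_general μ P s ε hs hε Y hmax C₁ hC₁ hrough c hc C₂ hC₂ hrel hloc
    cminus cplus h0 hle hfin hvol
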